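/- Define a : ℕ → ℕ for n ≥ 1 by a(n) = 2^(ν₂(n)). Then for all m ≥ 1 and n ≥ 1, if a(k) = a(k + m) for all k in the range 1 ≤ k ≤ 2^n, then 2^n divides m. -/
import Mathlib

/-- The ruler sequence: `a n = 2 ^ ν₂(n)`, the largest power of 2 dividing `n`. -/
def rulerSeq (n : ℕ) : ℕ := 2 ^ (padicValNat 2 n)

theorem rulerSeq_partial_period (m n : ℕ) (hm : 1 ≤ m) (hn : 1 ≤ n)
    (h : ∀ k : ℕ, 1 ≤ k → k ≤ 2 ^ n → rulerSeq k = rulerSeq (k + m)) :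
    2 ^ n ∣ m := by
  have h1 := h (2 ^ n) (Nat.one_le_two_pow) le_rfl
  unfold rulerSeq at h1
  rw [padicValNat.prime_pow n] at h1
  have hv : padicValNat 2 (2 ^ n + m) = n :=
    Nat.pow_right_injective (le_refl 2) h1.symm
  have hdvd : 2 ^ n ∣ 2 ^ n + m := by
    have := pow_padicValNat_dvd (p := 2) (n := 2 ^ n + m)
    rwa [hv] at this
  exact (Nat.dvd_add_right (dvd_refl _)).mp hdvd
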